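/- arXiv:1010.3366 — 5 statements merged into one kernel-verified Lean document; each statement's English description precedes it below -/
import Mathlib

section
/- Let S : [0,1] → ℝ be continuously differentiable with |Ṡ|₁ = ∫₀¹ |S'(t)| dt < ∞, and let θ_j = ∫₀¹ S(t) φ_j(t) dt be its Fourier coefficients with respect to the trigonometric basis φ₁ = 1, φ_j(x) = √2·cos(2π[j/2]x) for even j and φ_j(x) = √2·sin(2π[j/2]x) for odd j ≥ 3. Then for every l ≥ 2, l·∑_{j≥l} θ_j² ≤ 4·|Ṡ|₁². -/
open MeasureTheory Real

/-- The trigonometric basis of L²[0,1]: φ₁ = 1, φ_j(x) = √2·cos(2π[j/2]x) for even j,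
φ_j(x) = √2·sin(2π[j/2]x) for odd j ≥ 3. -/
noncomputable def phi (j : ℕ) : ℝ → ℝ := fun x =>
  if j = 1 then 1
  else if Even j then Real.sqrt 2 * Real.cos (2 * Real.pi * ((j / 2 : ℕ) : ℝ) * x)
  else Real.sqrt 2 * Real.sin (2 * Real.pi * ((j / 2 : ℕ) : ℝ) * x)

/-!
Since `S` is `C¹` and `S 0 = S 1`, one integration by parts against `φ_j` (with `k = [j/2] ≥ 1`)
leaves no boundary term and gives `|θ_j| ≤ √2 |Ṡ|₁ / (2πk)`. As `(j - 1) j ≤ 6 k² ≤ 4π² k²`,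
this yields `θ_j² ≤ 2 |Ṡ|₁² (1/(j-1) - 1/j)`, and the tail of this telescoping series from `l`
is `2 |Ṡ|₁² / (l - 1) ≤ 4 |Ṡ|₁² / l`.
-/

lemma abs_integral_mul_le_of_hasDerivAt {S F g : ℝ → ℝ} {a b M : ℝ} (hab : a ≤ b)
    (hS : ContDiff ℝ 1 S) (hF : ∀ x, HasDerivAt F (g x) x) (hg : Continuous g)
    (hFM : ∀ x, |F x| ≤ M) (hbd : S b * F b = S a * F a) :
    |∫ x in a..b, S x * g x| ≤ M * ∫ x in a..b, |deriv S x| := by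
  have hS' : Continuous (deriv S) := hS.continuous_deriv le_rfl
  have hFc : Continuous F := continuous_iff_continuousAt.2 fun x => (hF x).continuousAt
  rw [intervalIntegral.integral_mul_deriv_eq_deriv_mul
      (fun x _ => (hS.differentiable one_ne_zero x).hasDerivAt) (fun x _ => hF x)
      (hS'.intervalIntegrable a b) (hg.intervalIntegrable a b),
    hbd, sub_self, zero_sub, abs_neg, ← intervalIntegral.integral_const_mul]
  calc |∫ x in a..b, deriv S x * F x| ≤ ∫ x in a..b, |deriv S x * F x| :=
        intervalIntegral.abs_integral_le_integral_abs hab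
    _ ≤ ∫ x in a..b, M * |deriv S x| := by
        refine intervalIntegral.integral_mono_on hab
          ((hS'.mul hFc).abs.intervalIntegrable a b)
          ((hS'.abs.const_mul M).intervalIntegrable a b) fun x _ => ?_
        rw [abs_mul, mul_comm]
        exact mul_le_mul_of_nonneg_right (hFM x) (abs_nonneg _)

lemma abs_integral_mul_cos_le {S : ℝ → ℝ} (hS : ContDiff ℝ 1 S) {k : ℕ} (hk : 0 < k) :
    |∫ t in (0:ℝ)..1, S t * cos (2 * π * k * t)|
      ≤ (2 * π * k)⁻¹ * ∫ t in (0:ℝ)..1, |deriv S t| := by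
  set c : ℝ := 2 * π * k
  have hc : 0 < c := by positivity
  refine abs_integral_mul_le_of_hasDerivAt zero_le_one hS (F := fun t => c⁻¹ * sin (c * t))
    (fun x => ?_) (by fun_prop) (fun x => ?_) ?_
  · exact (((hasDerivAt_id' x).const_mul c).sin.const_mul c⁻¹).congr_deriv (by field_simp)
  · rw [abs_mul, abs_of_pos (inv_pos.2 hc)]
    exact mul_le_of_le_one_right (inv_nonneg.2 hc.le) (abs_sin_le_one _)
  · have : sin c = 0 := by
      rw [show c = ((2 * k : ℕ) : ℝ) * π by push_cast [c]; ring]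
      exact sin_nat_mul_pi _
    simp [this]

lemma abs_integral_mul_sin_le {S : ℝ → ℝ} (hS : ContDiff ℝ 1 S) (hper : S 0 = S 1) {k : ℕ}
    (hk : 0 < k) :
    |∫ t in (0:ℝ)..1, S t * sin (2 * π * k * t)|
      ≤ (2 * π * k)⁻¹ * ∫ t in (0:ℝ)..1, |deriv S t| := by
  set c : ℝ := 2 * π * k
  have hc : 0 < c := by positivity
  refine abs_integral_mul_le_of_hasDerivAt zero_le_one hS (F := fun t => -(c⁻¹ * cos (c * t)))
    (fun x => ?_) (by fun_prop) (fun x => ?_) ?_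
  · exact (((hasDerivAt_id' x).const_mul c).cos.const_mul c⁻¹).neg.congr_deriv (by field_simp)
  · rw [abs_neg, abs_mul, abs_of_pos (inv_pos.2 hc)]
    exact mul_le_of_le_one_right (inv_nonneg.2 hc.le) (abs_cos_le_one _)
  · have : cos c = 1 := by
      rw [show c = (k : ℝ) * (2 * π) by simp only [c]; ring]
      exact cos_nat_mul_two_pi _
    simp [this, hper]

lemma phi_of_even {j : ℕ} (hj : Even j) (x : ℝ) :
    phi j x = √2 * cos (2 * π * (j / 2 : ℕ) * x) := by
  have : j ≠ 1 := by rintro rfl; exact Nat.not_even_one hj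
  simp [phi, this, hj]

lemma phi_of_odd {j : ℕ} (hj : Odd j) (hj1 : j ≠ 1) (x : ℝ) :
    phi j x = √2 * sin (2 * π * (j / 2 : ℕ) * x) := by
  simp [phi, hj1, Nat.not_even_iff_odd.2 hj]

lemma abs_integral_mul_phi_le {S : ℝ → ℝ} (hS : ContDiff ℝ 1 S) (hper : S 0 = S 1) {j : ℕ}
    (hj : 2 ≤ j) :
    |∫ t in (0:ℝ)..1, S t * phi j t|
      ≤ √2 * ((2 * π * (j / 2 : ℕ))⁻¹ * ∫ t in (0:ℝ)..1, |deriv S t|) := by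
  have hk : 0 < j / 2 := by omega
  rcases Nat.even_or_odd j with he | ho
  · simp_rw [phi_of_even he, mul_left_comm (S _), intervalIntegral.integral_const_mul, abs_mul,
      abs_of_nonneg (sqrt_nonneg 2)]
    gcongr
    exact abs_integral_mul_cos_le hS hk
  · simp_rw [phi_of_odd ho (by omega), mul_left_comm (S _), intervalIntegral.integral_const_mul,
      abs_mul, abs_of_nonneg (sqrt_nonneg 2)]
    gcongr
    exact abs_integral_mul_sin_le hS hper hk

lemma pred_mul_self_le_six_mul_sq_half (j : ℕ) : ((j : ℝ) - 1) * j ≤ 6 * ((j / 2 : ℕ) : ℝ) ^ 2 := by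
  obtain ⟨k, rfl | rfl⟩ := Nat.even_or_odd' j
  · rw [Nat.mul_div_cancel_left k two_pos]
    push_cast
    nlinarith [sq_nonneg (k : ℝ)]
  · rw [show (2 * k + 1) / 2 = k by omega]
    have : (k : ℝ) ≤ k ^ 2 := by exact_mod_cast Nat.le_self_pow two_ne_zero k
    push_cast
    nlinarith

lemma sq_integral_mul_phi_le {S : ℝ → ℝ} (hS : ContDiff ℝ 1 S) (hper : S 0 = S 1) {j : ℕ}
    (hj : 2 ≤ j) :
    (∫ t in (0:ℝ)..1, S t * phi j t) ^ 2
      ≤ 2 * (∫ t in (0:ℝ)..1, |deriv S t|) ^ 2 / ((j - 1) * j) := by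
  have hj' : (2 : ℝ) ≤ j := by exact_mod_cast hj
  have hπ : 9 * ((j / 2 : ℕ) : ℝ) ^ 2 ≤ π ^ 2 * ((j / 2 : ℕ) : ℝ) ^ 2 := by
    gcongr; nlinarith [pi_gt_three]
  calc (∫ t in (0:ℝ)..1, S t * phi j t) ^ 2
      ≤ (√2 * ((2 * π * (j / 2 : ℕ))⁻¹ * ∫ t in (0:ℝ)..1, |deriv S t|)) ^ 2 := by
        rw [← sq_abs]; gcongr; exact abs_integral_mul_phi_le hS hper hj
    _ = 2 * (∫ t in (0:ℝ)..1, |deriv S t|) ^ 2 / (4 * π ^ 2 * ((j / 2 : ℕ) : ℝ) ^ 2) := by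
        rw [mul_pow, sq_sqrt zero_le_two]; field_simp; ring
    _ ≤ 2 * (∫ t in (0:ℝ)..1, |deriv S t|) ^ 2 / ((j - 1) * j) :=
        div_le_div_of_nonneg_left (by positivity) (by nlinarith)
          (by nlinarith [pred_mul_self_le_six_mul_sq_half j])

lemma tsum_subtype_le_eq_tsum_add {M : Type*} [AddCommMonoid M] [TopologicalSpace M]
    (f : ℕ → M) (l : ℕ) : ∑' j : {j : ℕ // l ≤ j}, f j = ∑' n, f (n + l) := by
  let e : ℕ ≃ {j : ℕ // l ≤ j} :=
    { toFun := fun n => ⟨n + l, by omega⟩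
      invFun := fun j => j.1 - l
      left_inv := fun n => by simp
      right_inv := fun j => Subtype.ext (by simp; omega) }
  exact (e.tsum_eq fun j => f j).symm

lemma tsum_tail_le_of_le_div_pred_mul {f : ℕ → ℝ} {C : ℝ} {l : ℕ} (hl : 2 ≤ l)
    (hf0 : ∀ j, 0 ≤ f j) (hf : ∀ j, l ≤ j → f j ≤ C / ((j - 1) * j)) :
    ∑' j : {j : ℕ // l ≤ j}, f j ≤ C / (l - 1) := by
  have hl' : (2 : ℝ) ≤ l := by exact_mod_cast hl
  have hC : 0 ≤ C := by
    have hd : (0 : ℝ) < (l - 1) * l := by nlinarith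
    simpa [hd.ne'] using mul_nonneg ((hf0 l).trans (hf l le_rfl)) hd.le
  set g : ℕ → ℝ := fun n => C / (n + l - 1)
  rw [tsum_subtype_le_eq_tsum_add]
  refine Real.tsum_le_of_sum_range_le (fun n => hf0 _) fun n => ?_
  calc ∑ i ∈ Finset.range n, f (i + l) ≤ ∑ i ∈ Finset.range n, (g i - g (i + 1)) := by
        refine Finset.sum_le_sum fun i _ => (hf _ (by omega)).trans_eq ?_
        have h1 : (i : ℝ) + l - 1 ≠ 0 := by linarith [(i.cast_nonneg : (0 : ℝ) ≤ i)]
        have h2 : (i : ℝ) + l ≠ 0 := by linarith [(i.cast_nonneg : (0 : ℝ) ≤ i)]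
        simp only [g, Nat.cast_add, Nat.cast_one, add_right_comm _ (1 : ℝ), add_sub_cancel_right]
        rw [div_sub_div _ _ h1 h2]
        ring
    _ = g 0 - g n := Finset.sum_range_sub' g n
    _ ≤ C / (l - 1) := by
        have : 0 ≤ g n := div_nonneg hC (by linarith [(n.cast_nonneg : (0 : ℝ) ≤ n)])
        simp only [g] at this ⊢
        simp only [CharP.cast_eq_zero, zero_add]
        linarith

theorem tail_fourier_bound (S : ℝ → ℝ) (hS : ContDiff ℝ 1 S) (hper : S 0 = S 1)
    (θ : ℕ → ℝ) (hθ : ∀ j, θ j = ∫ t in (0:ℝ)..1, S t * phi j t) :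
    ∀ l : ℕ, 2 ≤ l →
      (l : ℝ) * (∑' j : {j : ℕ // l ≤ j}, (θ j) ^ 2)
        ≤ 4 * (∫ t in (0:ℝ)..1, |deriv S t|) ^ 2 := by
  intro l hl
  have hl' : (2 : ℝ) ≤ l := by exact_mod_cast hl
  have htail : ∑' j : {j : ℕ // l ≤ j}, θ j ^ 2
      ≤ 2 * (∫ t in (0:ℝ)..1, |deriv S t|) ^ 2 / (l - 1) :=
    tsum_tail_le_of_le_div_pred_mul hl (fun j => sq_nonneg _) fun j hj =>
      hθ j ▸ sq_integral_mul_phi_le hS hper (hl.trans hj)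
  calc (l : ℝ) * ∑' j : {j : ℕ // l ≤ j}, θ j ^ 2
      ≤ l * (2 * (∫ t in (0:ℝ)..1, |deriv S t|) ^ 2 / (l - 1)) := by gcongr
    _ ≤ 4 * (∫ t in (0:ℝ)..1, |deriv S t|) ^ 2 := by
        rw [mul_div_assoc', div_le_iff₀ (by linarith)]
        nlinarith [sq_nonneg (∫ t in (0:ℝ)..1, |deriv S t|)]
end

section
/- Let υ : ℝ → ℝ be continuously differentiable and Ψ : [0,n] → ℝ integrable, with n ≥ 1 and α > 0. Define ϖ_{1,Ψ} = max over 0 ≤ v ≤ n and 0 ≤ t ≤ n−v of |∫₀ᵗ Ψ(u+v) du|. Then sup_{0 ≤ t ≤ n} |∫₀ᵗ e^{-α(t-s)} Ψ(s) υ(s) ds| ≤ ϖ_{1,Ψ}·(2‖υ‖_* + ‖υ'‖_*/α), where ‖f‖_* = sup_{0 ≤ t ≤ n} |f(t)|. -/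
/-!
With `Φ x = ∫₀ˣ Ψ`, which is absolutely continuous with `Φ' = Ψ` a.e., integration by parts
against the `C¹` weight `G s = e^{-α(t-s)} υ s` gives `∫₀ᵗ G Ψ = G t Φ t - ∫₀ᵗ G' Φ`.
Here `|Φ| ≤ W` on `[0, t]`, `|G t| = |υ t| ≤ ‖υ‖_*`, and
`|G' s| ≤ (α ‖υ‖_* + ‖υ'‖_*) e^{-α(t-s)}`, whose integral over `[0, t]` is at most
`‖υ‖_* + ‖υ'‖_* / α`.
-/

open MeasureTheory Real Set

theorem AbsolutelyContinuousOnInterval.integral_mul_eq_sub_integral_deriv_mul_primitive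
    {G Ψ : ℝ → ℝ} {a b : ℝ} (hG : AbsolutelyContinuousOnInterval G a b)
    (hΨ : IntervalIntegrable Ψ volume a b) :
    ∫ x in a..b, G x * Ψ x =
      G b * (∫ x in a..b, Ψ x) - ∫ x in a..b, deriv G x * ∫ u in a..x, Ψ u := by
  have hΦ := hΨ.absolutelyContinuousOnInterval_intervalIntegral (c := a) left_mem_uIcc
  have hderiv_primitive : ∀ᵐ x, x ∈ uIoc a b →
      G x * Ψ x = G x * deriv (fun x ↦ ∫ u in a..x, Ψ u) x := by
    filter_upwards [hΨ.ae_hasDerivAt_integral] with x hx hxab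
    rw [(hx (uIoc_subset_uIcc hxab) a left_mem_uIcc).deriv]
  rw [intervalIntegral.integral_congr_ae hderiv_primitive, hG.integral_mul_deriv_eq_deriv_mul hΦ]
  simp

theorem abs_integral_mul_le_of_abs_primitive_le {G Ψ g : ℝ → ℝ} {a b W : ℝ} (hab : a ≤ b)
    (hG : AbsolutelyContinuousOnInterval G a b) (hΨ : IntervalIntegrable Ψ volume a b)
    (hW : ∀ x ∈ Icc a b, |∫ u in a..x, Ψ u| ≤ W)
    (hg : IntervalIntegrable g volume a b) (hG' : ∀ x ∈ Icc a b, |deriv G x| ≤ g x) :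
    |∫ x in a..b, G x * Ψ x| ≤ W * (|G b| + ∫ x in a..b, g x) := by
  have hrest : ‖∫ x in a..b, deriv G x * ∫ u in a..x, Ψ u‖ ≤ ∫ x in a..b, W * g x := by
    refine intervalIntegral.norm_integral_le_of_norm_le hab
      (Filter.Eventually.of_forall fun x hx ↦ ?_) (hg.const_mul W)
    have hx' := Ioc_subset_Icc_self hx
    rw [Real.norm_eq_abs, abs_mul, mul_comm W]
    exact mul_le_mul (hG' x hx') (hW x hx') (abs_nonneg _) ((abs_nonneg _).trans (hG' x hx'))
  rw [Real.norm_eq_abs, intervalIntegral.integral_const_mul] at hrest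
  rw [hG.integral_mul_eq_sub_integral_deriv_mul_primitive hΨ]
  calc _ ≤ |G b| * |∫ x in a..b, Ψ x| + |∫ x in a..b, deriv G x * ∫ u in a..x, Ψ u| := by
        rw [← abs_mul]; exact abs_sub _ _
    _ ≤ |G b| * W + W * ∫ x in a..b, g x := by
        gcongr
        exact hW b (right_mem_Icc.2 hab)
    _ = W * (|G b| + ∫ x in a..b, g x) := by ring
theorem hasDerivAt_exp_neg_mul_sub (α t s : ℝ) :
    HasDerivAt (fun s ↦ exp (-α * (t - s))) (α * exp (-α * (t - s))) s := by
  have h : HasDerivAt (fun s ↦ -α * (t - s)) α s := by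
    simpa using ((hasDerivAt_id s).const_sub t).const_mul (-α)
  simpa [mul_comm] using h.exp

theorem integral_exp_neg_mul_sub_le_inv {α : ℝ} (hα : 0 < α) (t : ℝ) :
    ∫ s in 0..t, exp (-α * (t - s)) ≤ α⁻¹ := by
  have hprim : ∀ s ∈ uIcc 0 t,
      HasDerivAt (fun s ↦ exp (-α * (t - s)) / α) (exp (-α * (t - s))) s := fun s _ ↦ by
    simpa [hα.ne'] using (hasDerivAt_exp_neg_mul_sub α t s).div_const α
  rw [intervalIntegral.integral_eq_sub_of_hasDerivAt hprim
    (Continuous.intervalIntegrable (by fun_prop) _ _), sub_self, mul_zero,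
    exp_zero, one_div, sub_le_self_iff]
  positivity

theorem abs_deriv_exp_neg_mul_sub_mul_le {υ : ℝ → ℝ} {α t s M M' : ℝ} (hα : 0 ≤ α)
    (hυ : DifferentiableAt ℝ υ s) (hM : |υ s| ≤ M) (hM' : |deriv υ s| ≤ M') :
    |deriv (fun s ↦ exp (-α * (t - s)) * υ s) s| ≤ (α * M + M') * exp (-α * (t - s)) := by
  rw [((hasDerivAt_exp_neg_mul_sub α t s).fun_mul hυ.hasDerivAt).deriv]
  calc _ = |exp (-α * (t - s)) * (α * υ s + deriv υ s)| := by ring_nf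
    _ = exp (-α * (t - s)) * |α * υ s + deriv υ s| := by rw [abs_mul, abs_of_pos (exp_pos _)]
    _ ≤ exp (-α * (t - s)) * (α * M + M') := by
        gcongr
        calc _ ≤ |α * υ s| + |deriv υ s| := abs_add_le _ _
          _ ≤ α * M + M' := by rw [abs_mul, abs_of_nonneg hα]; gcongr
    _ = _ := mul_comm _ _

theorem exp_weighted_integral_bound_general (n : ℝ) (α : ℝ) (hα : 0 < α)
    (υ Ψ : ℝ → ℝ) (hυ : ContDiff ℝ 1 υ)
    (hΨ : IntegrableOn Ψ (Set.Icc 0 n))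
    (W Mυ Mυ' : ℝ)
    (hW : ∀ v ∈ Set.Icc (0:ℝ) n, ∀ t ∈ Set.Icc (0:ℝ) (n - v),
      |∫ u in (0:ℝ)..t, Ψ (u + v)| ≤ W)
    (hMυ : ∀ t ∈ Set.Icc (0:ℝ) n, |υ t| ≤ Mυ)
    (hMυ' : ∀ t ∈ Set.Icc (0:ℝ) n, |deriv υ t| ≤ Mυ') :
    ∀ t ∈ Set.Icc (0:ℝ) n,
      |∫ s in (0:ℝ)..t, Real.exp (-α * (t - s)) * Ψ s * υ s|
        ≤ W * (2 * Mυ + Mυ' / α) := by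
  rintro t ⟨ht0, htn⟩
  have hsub : Icc 0 t ⊆ Icc 0 n := Icc_subset_Icc_right htn
  have hG : AbsolutelyContinuousOnInterval (fun s ↦ exp (-α * (t - s)) * υ s) 0 t :=
    ContDiffOn.absolutelyContinuousOnInterval (by fun_prop)
  have hΨt : IntervalIntegrable Ψ volume 0 t :=
    (intervalIntegrable_iff_integrableOn_Icc_of_le ht0).2 (hΨ.mono_set hsub)
  have hWt : ∀ x ∈ Icc 0 t, |∫ u in 0..x, Ψ u| ≤ W := fun x hx ↦ by
    simpa using hW 0 (hsub ⟨le_rfl, ht0⟩) x (by simpa using hsub hx)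
  have hbound := abs_integral_mul_le_of_abs_primitive_le ht0 hG hΨt hWt
    (g := fun s ↦ (α * Mυ + Mυ') * exp (-α * (t - s)))
    (Continuous.intervalIntegrable (by fun_prop) _ _) fun s hs ↦
      abs_deriv_exp_neg_mul_sub_mul_le hα.le (hυ.differentiable one_ne_zero s)
        (hMυ s (hsub hs)) (hMυ' s (hsub hs))
  have hW0 : 0 ≤ W := (abs_nonneg _).trans (hWt 0 ⟨le_rfl, ht0⟩)
  have hM0 : 0 ≤ α * Mυ + Mυ' := by
    have := (abs_nonneg _).trans (hMυ t (hsub ⟨ht0, le_rfl⟩))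
    have := (abs_nonneg _).trans (hMυ' t (hsub ⟨ht0, le_rfl⟩))
    positivity
  calc _ = |∫ s in 0..t, exp (-α * (t - s)) * υ s * Ψ s| := by simp only [mul_right_comm]
    _ ≤ W * (|υ t| + (α * Mυ + Mυ') * ∫ s in 0..t, exp (-α * (t - s))) := by
        simpa [intervalIntegral.integral_const_mul] using hbound
    _ ≤ W * (Mυ + (α * Mυ + Mυ') * α⁻¹) := by
        gcongr
        · exact hMυ t (hsub ⟨ht0, le_rfl⟩)
        · exact integral_exp_neg_mul_sub_le_inv hα t
    _ = W * (2 * Mυ + Mυ' / α) := by field_simp; ring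

/-- Lemma A.3: bound for exponentially-weighted integrals.  Here `W` is an upper
bound for the correlation measure ϖ_{1,Ψ} = max_{0≤v≤n, 0≤t≤n-v} |∫₀ᵗ Ψ(u+v) du|. -/
theorem exp_weighted_integral_bound (n : ℝ) (hn : 1 ≤ n) (α : ℝ) (hα : 0 < α)
    (υ Ψ : ℝ → ℝ) (hυ : ContDiff ℝ 1 υ)
    (hΨ : IntegrableOn Ψ (Set.Icc 0 n))
    (W Mυ Mυ' : ℝ)
    (hW : ∀ v ∈ Set.Icc (0:ℝ) n, ∀ t ∈ Set.Icc (0:ℝ) (n - v),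
      |∫ u in (0:ℝ)..t, Ψ (u + v)| ≤ W)
    (hMυ : ∀ t ∈ Set.Icc (0:ℝ) n, |υ t| ≤ Mυ)
    (hMυ' : ∀ t ∈ Set.Icc (0:ℝ) n, |deriv υ t| ≤ Mυ') :
    ∀ t ∈ Set.Icc (0:ℝ) n,
      |∫ s in (0:ℝ)..t, Real.exp (-α * (t - s)) * Ψ s * υ s|
        ≤ W * (2 * Mυ + Mυ' / α) :=
  exp_weighted_integral_bound_general n α hα υ Ψ hυ hΨ W Mυ Mυ' hW hMυ hMυ'
end

section
/- Let a ≤ 0, n ≥ 1, and let f, g : [0,∞) → ℝ be bounded measurable functions. Define ϖ*_{f,g} = max( max_{0≤v≤n, 0≤t≤n-v} |∫₀ᵗ f(u+v)g(u) du|, max_{0≤v≤n, 0≤t≤n-v} |∫₀ᵗ g(u+v)f(u) du| ). Then for every 0 ≤ v ≤ n and 0 ≤ t ≤ n−v, |∫₀ᵗ f(s+v) g(s) (1 + e^{2as}) ds| ≤ 3·ϖ*_{f,g}. -/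
/-!
Write `F s = f (s + v) g s`, `Υ x = ∫₀ˣ F` and `w s = 1 + e^{2as}`. Integration by parts against
the absolutely continuous primitive `Υ` gives `∫₀ᵗ F w = w(t) Υ(t) - ∫₀ᵗ w' Υ`. Since `a ≤ 0`, the
weight `w` is positive and nonincreasing, so `|w'| = -w'` and the right side is at most
`(w(t) + (w(0) - w(t))) · sup |Υ| = w(0) · sup |Υ| = 2 ϖ ≤ 3 ϖ`.
-/

open MeasureTheory Real

section

variable {F w : ℝ → ℝ} {a b : ℝ}

theorem integral_mul_eq_mul_integral_sub_integral_deriv_mul_primitive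
    (hF : IntervalIntegrable F volume a b) (hw : AbsolutelyContinuousOnInterval w a b) :
    ∫ x in a..b, F x * w x =
      w b * (∫ x in a..b, F x) - ∫ x in a..b, deriv w x * ∫ y in a..x, F y := by
  have hprim := hF.absolutelyContinuousOnInterval_intervalIntegral (Set.left_mem_uIcc (b := b))
  have hderiv : ∀ᵐ x, x ∈ Set.uIoc a b → w x * deriv (fun x ↦ ∫ y in a..x, F y) x = F x * w x := by
    filter_upwards [hF.ae_hasDerivAt_integral] with x hx hxab
    rw [(hx (Set.uIoc_subset_uIcc hxab) a Set.left_mem_uIcc).deriv, mul_comm]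
  rw [← intervalIntegral.integral_congr_ae hderiv, hw.integral_mul_deriv_eq_deriv_mul hprim,
    intervalIntegral.integral_same, mul_zero, sub_zero]

theorem abs_integral_mul_le_of_antitoneOn {W : ℝ} (hab : a ≤ b)
    (hF : IntervalIntegrable F volume a b) (hw : AbsolutelyContinuousOnInterval w a b)
    (hw_anti : AntitoneOn w (Set.Icc a b)) (hwb : 0 ≤ w b)
    (hW : ∀ x ∈ Set.Icc a b, |∫ y in a..x, F y| ≤ W) :
    |∫ x in a..b, F x * w x| ≤ w a * W := by
  rw [integral_mul_eq_mul_integral_sub_integral_deriv_mul_primitive hF hw]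
  have hderiv_nonpos : ∀ x ∈ Set.Ioo a b, deriv w x ≤ 0 := by
    intro x hx
    rw [← derivWithin_of_mem_nhds (Icc_mem_nhds hx.1 hx.2)]
    exact hw_anti.derivWithin_nonpos
  have hbW : |w b * ∫ x in a..b, F x| ≤ w b * W := by
    rw [abs_mul, abs_of_nonneg hwb]
    exact mul_le_mul_of_nonneg_left (hW b ⟨hab, le_rfl⟩) hwb
  have hderivW : |∫ x in a..b, deriv w x * ∫ y in a..x, F y| ≤ (w a - w b) * W := by
    have hne : ∀ᵐ x ∂volume, x ≠ b := by simp [ae_iff, measure_singleton]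
    calc |∫ x in a..b, deriv w x * ∫ y in a..x, F y|
        ≤ ∫ x in a..b, -deriv w x * W := by
          rw [← Real.norm_eq_abs]
          refine intervalIntegral.norm_integral_le_of_norm_le hab ?_
            (hw.intervalIntegrable_deriv.neg.mul_const W)
          filter_upwards [hne] with x hxb hx
          have hneg := hderiv_nonpos x ⟨hx.1, lt_of_le_of_ne hx.2 hxb⟩
          rw [Real.norm_eq_abs, abs_mul, abs_of_nonpos hneg]
          exact mul_le_mul_of_nonneg_left (hW x ⟨hx.1.le, hx.2⟩) (neg_nonneg.2 hneg)
      _ = (w a - w b) * W := by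
        rw [intervalIntegral.integral_mul_const, intervalIntegral.integral_neg,
          hw.integral_deriv_eq_sub, neg_sub]
  calc |w b * (∫ x in a..b, F x) - ∫ x in a..b, deriv w x * ∫ y in a..x, F y|
      ≤ |w b * ∫ x in a..b, F x| + |∫ x in a..b, deriv w x * ∫ y in a..x, F y| := abs_sub _ _
    _ ≤ w b * W + (w a - w b) * W := add_le_add hbW hderivW
    _ = w a * W := by ring

end

theorem shifted_correlation_bound_general (a : ℝ) (ha : a ≤ 0) (n : ℝ) (f g : ℝ → ℝ) (W : ℝ)
    (hW1 : ∀ v ∈ Set.Icc (0:ℝ) n, ∀ t ∈ Set.Icc (0:ℝ) (n - v),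
      |∫ u in (0:ℝ)..t, f (u + v) * g u| ≤ W) :
    ∀ v ∈ Set.Icc (0:ℝ) n, ∀ t ∈ Set.Icc (0:ℝ) (n - v),
      |∫ s in (0:ℝ)..t, f (s + v) * g s * (1 + Real.exp (2 * a * s))| ≤ 3 * W := by
  intro v hv t ht
  set F : ℝ → ℝ := fun s ↦ f (s + v) * g s
  set w : ℝ → ℝ := fun s ↦ 1 + Real.exp (2 * a * s)
  have hW : ∀ x ∈ Set.Icc 0 t, |∫ y in (0:ℝ)..x, F y| ≤ W :=
    fun x hx ↦ hW1 v hv x ⟨hx.1, hx.2.trans ht.2⟩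
  have hW_nonneg : 0 ≤ W := by simpa using hW 0 ⟨le_rfl, ht.1⟩
  have hw_pos : ∀ s, 0 < w s := fun s ↦ by positivity
  by_cases hF : IntervalIntegrable F volume 0 t
  · have hw_anti : Antitone w := fun x y hxy ↦
      add_le_add_right (Real.exp_le_exp.2 (by nlinarith)) 1
    have hw_ac : AbsolutelyContinuousOnInterval w 0 t :=
      (ContDiff.contDiffOn (by fun_prop)).absolutelyContinuousOnInterval
    calc |∫ s in (0:ℝ)..t, F s * w s|
        ≤ w 0 * W := abs_integral_mul_le_of_antitoneOn ht.1 hF hw_ac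
          (hw_anti.antitoneOn _) (hw_pos t).le hW
      _ ≤ 3 * W := by simp only [w, mul_zero, Real.exp_zero]; linarith
  · -- Dividing by the continuous positive weight `w` shows that `F w` is not integrable either,
    -- so the integral takes its junk value `0`.
    have hFw : ¬IntervalIntegrable (fun s ↦ F s * w s) volume 0 t := fun hFw ↦ hF <| by
      simpa [mul_assoc, mul_inv_cancel₀ (hw_pos _).ne'] using
        hFw.mul_continuousOn (g := fun s ↦ (w s)⁻¹)
          (Continuous.continuousOn (by fun_prop (disch := exact fun s ↦ (hw_pos s).ne')))
    rw [intervalIntegral.integral_undef hFw, abs_zero]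
    positivity

/-- For a ≤ 0, |∫₀ᵗ f(s+v) g(s) (1 + e^{2as}) ds| ≤ 3 ϖ*_{f,g}; here `W` is an
upper bound on both shifted-correlation families defining ϖ*_{f,g}. -/
theorem shifted_correlation_bound (a : ℝ) (ha : a ≤ 0) (n : ℝ) (hn : 1 ≤ n)
    (f g : ℝ → ℝ) (hf : Measurable f) (hg : Measurable g)
    (hfb : ∃ C, ∀ x, |f x| ≤ C) (hgb : ∃ C, ∀ x, |g x| ≤ C)
    (W : ℝ)
    (hW1 : ∀ v ∈ Set.Icc (0:ℝ) n, ∀ t ∈ Set.Icc (0:ℝ) (n - v),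
      |∫ u in (0:ℝ)..t, f (u + v) * g u| ≤ W)
    (hW2 : ∀ v ∈ Set.Icc (0:ℝ) n, ∀ t ∈ Set.Icc (0:ℝ) (n - v),
      |∫ u in (0:ℝ)..t, g (u + v) * f u| ≤ W) :
    ∀ v ∈ Set.Icc (0:ℝ) n, ∀ t ∈ Set.Icc (0:ℝ) (n - v),
      |∫ s in (0:ℝ)..t, f (s + v) * g s * (1 + Real.exp (2 * a * s))| ≤ 3 * W :=
  shifted_correlation_bound_general a ha n f g W hW1
end

section
/- Let a ≤ 0 and γ_j = 2π[j/2] for j ≥ 2. Define F(v) = ∫₀^{n−v} (1 + e^{2at}) dt and D₁(n) = ∫₀ⁿ e^{av} F(v) cos(vγ_j) dv. Then |D₁(n)| ≤ (3n|a| + 10)/γ_j². -/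
/-!
Write the integrand as `G v * cos (v γ)` with `G v = e^{av} F(v)`, `F(v) = ∫₀^{n-v} (1 + e^{2at}) dt`.
Since `G n = 0`, integrating by parts twice gives
`γ² ∫₀ⁿ G cos(vγ) = G'(n) cos(nγ) - G'(0) - ∫₀ⁿ G'' cos(vγ)`, and `G'' = e^{av}(a² F - 2a) ≥ 0`
for `a ≤ 0`, so the last integral is at most `∫₀ⁿ G'' = G'(n) - G'(0)` in absolute value.
Both `G'(n) = -2e^{an}` and `G'(0) = an - 3/2 - e^{2an}/2` are nonpositive, so everything is
bounded by `-2 G'(0) ≤ 2n|a| + 4`.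
-/

open Real Set intervalIntegral MeasureTheory

section DoubleIntegrationByParts

variable {G G' G'' : ℝ → ℝ} {n γ : ℝ}

theorem integral_mul_cos_eq_of_hasDerivAt
    (hG : ∀ x ∈ uIcc 0 n, HasDerivAt G (G' x) x)
    (hG' : ∀ x ∈ uIcc 0 n, HasDerivAt G' (G'' x) x)
    (hG'' : IntervalIntegrable G'' volume 0 n) (hγ : γ ≠ 0) :
    ∫ v in 0..n, G v * cos (v * γ) =
      G n * sin (n * γ) / γ + (G' n * cos (n * γ) - G' 0) / γ ^ 2
        - (∫ v in 0..n, G'' v * cos (v * γ)) / γ ^ 2 := by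
  have hlin (x : ℝ) : HasDerivAt (fun v => v * γ) γ x := by
    simpa using (hasDerivAt_id x).mul_const γ
  have hsin (x : ℝ) : HasDerivAt (fun v => sin (v * γ) / γ) (cos (x * γ)) x :=
    ((hlin x).sin.div_const γ).congr_deriv (by field_simp)
  have hcos (x : ℝ) : HasDerivAt (fun v => -cos (v * γ) / γ ^ 2) (sin (x * γ) / γ) x :=
    ((hlin x).cos.neg.div_const (γ ^ 2)).congr_deriv (by field_simp)
  have hG'_int : IntervalIntegrable G' volume 0 n :=
    ContinuousOn.intervalIntegrable fun x hx => (hG' x hx).continuousAt.continuousWithinAt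
  have hcos_int (x : ℝ) : IntervalIntegrable (fun v => cos (v * x)) volume 0 n :=
    (by fun_prop : Continuous fun v => cos (v * x)).intervalIntegrable 0 n
  rw [integral_mul_deriv_eq_deriv_mul hG (fun x _ => hsin x) hG'_int (hcos_int γ),
    integral_mul_deriv_eq_deriv_mul hG' (fun x _ => hcos x) hG''
      ((by fun_prop : Continuous fun v => sin (v * γ) / γ).intervalIntegrable 0 n)]
  simp only [mul_div_assoc', mul_neg, neg_div, intervalIntegral.integral_neg,
    intervalIntegral.integral_div, zero_mul, sin_zero, cos_zero]
  ring

theorem abs_integral_mul_cos_le_of_deriv2_nonneg (hn : 0 ≤ n)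
    (hG : ∀ x ∈ Icc 0 n, HasDerivAt G (G' x) x)
    (hG' : ∀ x ∈ Icc 0 n, HasDerivAt G' (G'' x) x)
    (hG'' : IntervalIntegrable G'' volume 0 n) (hGn : G n = 0)
    (hG''_nonneg : ∀ x ∈ Icc 0 n, 0 ≤ G'' x) (hγ : γ ≠ 0) :
    |∫ v in 0..n, G v * cos (v * γ)| ≤ (|G' n| + |G' 0| + (G' n - G' 0)) / γ ^ 2 := by
  rw [← uIcc_of_le hn] at hG hG'
  have hboundary : |G' n * cos (n * γ) - G' 0| ≤ |G' n| + |G' 0| := by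
    refine (abs_sub _ _).trans ?_
    rw [abs_mul]
    gcongr
    exact mul_le_of_le_one_right (abs_nonneg _) (abs_cos_le_one _)
  have hbulk : |∫ v in 0..n, G'' v * cos (v * γ)| ≤ G' n - G' 0 := by
    rw [← integral_eq_sub_of_hasDerivAt hG' hG'', ← Real.norm_eq_abs]
    refine intervalIntegral.norm_integral_le_of_norm_le hn (ae_of_all _ fun x hx => ?_) hG''
    have hx' : x ∈ Icc 0 n := Ioc_subset_Icc_self (uIoc_of_le hn ▸ hx)
    rw [Real.norm_eq_abs, abs_mul, abs_of_nonneg (hG''_nonneg x hx')]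
    exact mul_le_of_le_one_right (hG''_nonneg x hx') (abs_cos_le_one _)
  rw [integral_mul_cos_eq_of_hasDerivAt hG hG' hG'' hγ, hGn, zero_mul, zero_div, zero_add,
    ← sub_div, abs_div, abs_of_pos (sq_pos_of_ne_zero hγ)]
  gcongr ?_ / _
  exact (abs_sub _ _).trans (add_le_add hboundary hbulk)

end DoubleIntegrationByParts

section OrnsteinUhlenbeck

variable (a n : ℝ)

noncomputable def onePlusExpIntegral (x : ℝ) : ℝ := ∫ t in (0 : ℝ)..x, (1 + exp (2 * a * t))

theorem hasDerivAt_onePlusExpIntegral (x : ℝ) :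
    HasDerivAt (onePlusExpIntegral a) (1 + exp (2 * a * x)) x :=
  ((by fun_prop : Continuous fun t => 1 + exp (2 * a * t)).integral_hasStrictDerivAt 0 x).hasDerivAt

@[fun_prop]
theorem continuous_onePlusExpIntegral : Continuous (onePlusExpIntegral a) :=
  continuous_iff_continuousAt.2 fun x => (hasDerivAt_onePlusExpIntegral a x).continuousAt

theorem onePlusExpIntegral_zero : onePlusExpIntegral a 0 = 0 := integral_same

theorem onePlusExpIntegral_nonneg {x : ℝ} (hx : 0 ≤ x) : 0 ≤ onePlusExpIntegral a x :=
  integral_nonneg hx fun t _ => by positivity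

-- Multiplied by `a`, the closed form needs no division and also holds at `a = 0`.
theorem mul_onePlusExpIntegral (x : ℝ) :
    a * onePlusExpIntegral a x = a * x + (exp (2 * a * x) - 1) / 2 := by
  have hprim (t : ℝ) : HasDerivAt (fun t => a * t + exp (2 * a * t) / 2)
      (a * (1 + exp (2 * a * t))) t :=
    (((hasDerivAt_id' t).const_mul a).add
      (((hasDerivAt_id' t).const_mul (2 * a)).exp.div_const 2)).congr_deriv
      (by simp only [mul_one]; ring)
  rw [onePlusExpIntegral, ← intervalIntegral.integral_const_mul,
    integral_eq_sub_of_hasDerivAt (fun t _ => hprim t)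
      ((by fun_prop : Continuous _).intervalIntegrable _ _)]
  simp only [mul_zero, exp_zero, zero_add]
  ring

noncomputable def d1Weight (v : ℝ) : ℝ := exp (a * v) * onePlusExpIntegral a (n - v)

noncomputable def d1WeightDeriv (v : ℝ) : ℝ :=
  exp (a * v) * (a * onePlusExpIntegral a (n - v) - (1 + exp (2 * a * (n - v))))

theorem hasDerivAt_d1Weight (v : ℝ) : HasDerivAt (d1Weight a n) (d1WeightDeriv a n v) v :=
  (((hasDerivAt_id' v).const_mul a).exp.mul
    ((hasDerivAt_onePlusExpIntegral a (n - v)).comp_const_sub n v)).congr_deriv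
    (by simp only [d1WeightDeriv]; ring)

theorem hasDerivAt_d1WeightDeriv (v : ℝ) :
    HasDerivAt (d1WeightDeriv a n)
      (exp (a * v) * (a ^ 2 * onePlusExpIntegral a (n - v) - 2 * a)) v := by
  have hsub : HasDerivAt (fun v => 2 * a * (n - v)) (-(2 * a)) v := by
    simpa using ((hasDerivAt_id' v).const_sub n).const_mul (2 * a)
  exact (((hasDerivAt_id' v).const_mul a).exp.mul
    ((((hasDerivAt_onePlusExpIntegral a (n - v)).comp_const_sub n v).const_mul a).sub
      (hsub.exp.const_add 1))).congr_deriv (by simp only [Pi.sub_apply]; ring)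

theorem d1Weight_deriv2_nonneg (ha : a ≤ 0) {v : ℝ} (hv : v ≤ n) :
    0 ≤ exp (a * v) * (a ^ 2 * onePlusExpIntegral a (n - v) - 2 * a) := by
  have := onePlusExpIntegral_nonneg a (sub_nonneg.2 hv)
  have : 0 ≤ a ^ 2 * onePlusExpIntegral a (n - v) := by positivity
  have : 0 ≤ a ^ 2 * onePlusExpIntegral a (n - v) - 2 * a := by linarith
  positivity

theorem d1Weight_self : d1Weight a n n = 0 := by
  simp [d1Weight, onePlusExpIntegral_zero]

theorem d1WeightDeriv_self : d1WeightDeriv a n n = -2 * exp (a * n) := by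
  simp only [d1WeightDeriv, sub_self, onePlusExpIntegral_zero, mul_zero, exp_zero]
  ring

theorem d1WeightDeriv_zero : d1WeightDeriv a n 0 = a * n - 3 / 2 - exp (2 * a * n) / 2 := by
  simp only [d1WeightDeriv, mul_zero, exp_zero, one_mul, sub_zero, mul_onePlusExpIntegral]
  ring

end OrnsteinUhlenbeck

theorem D1_bound (a : ℝ) (ha : a ≤ 0) (n : ℝ) (hn : 1 ≤ n)
    (j : ℕ) (hj : 2 ≤ j) :
    |∫ v in (0:ℝ)..n,
        Real.exp (a * v) *
          (∫ t in (0:ℝ)..(n - v), (1 + Real.exp (2 * a * t))) *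
          Real.cos (v * (2 * Real.pi * ((j / 2 : ℕ) : ℝ)))|
      ≤ (3 * n * |a| + 10) / (2 * Real.pi * ((j / 2 : ℕ) : ℝ)) ^ 2 := by
  have hn₀ : 0 ≤ n := by linarith
  have hγ : 2 * π * ((j / 2 : ℕ) : ℝ) ≠ 0 := by
    have : 0 < j / 2 := by omega
    positivity
  refine (abs_integral_mul_cos_le_of_deriv2_nonneg hn₀
    (fun v _ => hasDerivAt_d1Weight a n v) (fun v _ => hasDerivAt_d1WeightDeriv a n v)
    ((by fun_prop : Continuous _).intervalIntegrable _ _) (d1Weight_self a n)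
    (fun v hv => d1Weight_deriv2_nonneg a n ha hv.2) hγ).trans ?_
  have han : a * n ≤ 0 := by nlinarith
  have hexp : exp (2 * a * n) ≤ 1 := exp_le_one_iff.2 (by linarith)
  have hbound : |d1WeightDeriv a n n| + |d1WeightDeriv a n 0|
      + (d1WeightDeriv a n n - d1WeightDeriv a n 0) ≤ 3 * n * |a| + 10 := by
    rw [d1WeightDeriv_self, d1WeightDeriv_zero, abs_of_nonpos ha,
      abs_of_nonpos (by linarith [exp_pos (a * n)]),
      abs_of_nonpos (by linarith [exp_pos (2 * a * n)])]
    linarith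
  gcongr
end

section
/- Let a ≤ 0, n ≥ 1, and f, g : [0,∞) → ℝ bounded measurable. Define H^{(2)}_{g,f}(t) = a²∫₀ᵗ∫₀^{t−z} e^{ay} g(y+z) (∫₀^y e^{av} f(v+z) dv) dy dz. Then sup_{0≤t≤n} |H^{(2)}_{g,f}(t)| ≤ 2·ϖ*_{f,g}, where ϖ*_{f,g} is the two-sided correlation measure max over both orderings of max_{0≤v≤n, 0≤t≤n−v} |∫₀ᵗ f(u+v)g(u) du|. -/
/-!
Fubini over the region `0 ≤ v ≤ y`, `0 ≤ z ≤ t - y` rewrites `H^{(2)}_{g,f}(t)` as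
`a² ∫₀ᵗ ∫₀^y e^{ay} e^{av} K(y, v) dv dy` with `K(y, v) = ∫₀^{t-y} g(y+z) f(v+z) dz`.
After the substitution `u = v + z`, `K(y, v)` is the difference of two partial correlations
of `g` and `f` at lag `y - v`, so `|K| ≤ 2W`, while
`a² ∫₀ᵗ ∫₀^y e^{ay} e^{av} dv dy = (e^{at} - 1)²/2`, which is at most `1` for `a ≤ 0`.
-/

open MeasureTheory Real Set Function

theorem measurable_intervalIntegral_of_uncurry {α : Type*} [MeasurableSpace α]
    {F : α → ℝ → ℝ} (hF : Measurable (uncurry F)) (c : ℝ) :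
    Measurable fun p : α × ℝ => ∫ v in c..p.2, F p.1 v := by
  have measurable_setIntegral {s : α × ℝ → Set ℝ}
      (hs : MeasurableSet {q : (α × ℝ) × ℝ | q.2 ∈ s q.1}) :
      Measurable fun p => ∫ v in s p, F p.1 v := by
    have hslice (p : α × ℝ) : MeasurableSet (s p) := hs.preimage measurable_prodMk_left
    have hind : Measurable ({q : (α × ℝ) × ℝ | q.2 ∈ s q.1}.indicator fun q => F q.1.1 q.2) :=
      (hF.comp ((measurable_fst.comp measurable_fst).prodMk measurable_snd)).indicator hs
    convert hind.stronglyMeasurable.integral_prod_right' (ν := volume) |>.measurable using 2 with p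
    rw [← integral_indicator (hslice p)]
    rfl
  exact (measurable_setIntegral (s := fun p => Ioc c p.2)
      (measurableSet_lt measurable_const measurable_snd |>.inter <|
        measurableSet_le measurable_snd (measurable_snd.comp measurable_fst))).sub
    (measurable_setIntegral (s := fun p => Ioc p.2 c)
      (measurableSet_lt (measurable_snd.comp measurable_fst) measurable_snd |>.inter <|
        measurableSet_le measurable_snd measurable_const))

lemma integrableOn_of_norm_le {α E : Type*} [PseudoMetricSpace α] [ProperSpace α]
    [MeasurableSpace α] {μ : Measure α} [IsFiniteMeasureOnCompacts μ] [NormedAddCommGroup E]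
    {φ : α → E} {s : Set α} {C : ℝ} (hφ : AEStronglyMeasurable φ μ) (hs : MeasurableSet s)
    (hsb : Bornology.IsBounded s) (hC : ∀ x ∈ s, ‖φ x‖ ≤ C) : IntegrableOn φ s μ :=
  Measure.integrableOn_of_bounded hsb.measure_lt_top.ne hφ
    ((ae_restrict_iff' hs).2 (ae_of_all _ hC))

lemma intervalIntegrable_of_abs_le {φ : ℝ → ℝ} {C : ℝ} (hφ : Measurable φ)
    (hC : ∀ x, |φ x| ≤ C) (a b : ℝ) : IntervalIntegrable φ volume a b :=
  intervalIntegrable_iff.2 <| integrableOn_of_norm_le hφ.aestronglyMeasurable measurableSet_uIoc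
    (Metric.isBounded_Ioc _ _) fun x _ => hC x

lemma intervalIntegral_eq_integral_indicator_Iic {E : Type*} [NormedAddCommGroup E]
    [NormedSpace ℝ E] {φ : ℝ → E} {b c : ℝ} (hc : 0 ≤ c) (hcb : c ≤ b) :
    ∫ y in (0:ℝ)..c, φ y = ∫ y in (0:ℝ)..b, (Iic c).indicator φ y := by
  rw [intervalIntegral.integral_of_le hc, intervalIntegral.integral_of_le (hc.trans hcb),
    setIntegral_indicator measurableSet_Iic, Ioc_inter_Iic, inf_eq_right.2 hcb]

theorem intervalIntegral_triangle_swap {E : Type*} [NormedAddCommGroup E] [NormedSpace ℝ E]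
    {F : ℝ → ℝ → E} {t : ℝ} (ht : 0 ≤ t) (hF : IntegrableOn (uncurry F) (Ioc 0 t ×ˢ Ioc 0 t)) :
    ∫ z in (0:ℝ)..t, ∫ y in (0:ℝ)..t - z, F z y = ∫ y in (0:ℝ)..t, ∫ z in (0:ℝ)..t - y, F z y := by
  set S := {p : ℝ × ℝ | p.1 + p.2 ≤ t}
  have hS : MeasurableSet S := measurableSet_le (by fun_prop) (by fun_prop)
  have cut {x : ℝ} (hx : x ∈ uIcc 0 t) (φ : ℝ → E) :
      ∫ y in (0:ℝ)..t - x, φ y = ∫ y in (0:ℝ)..t, (Iic (t - x)).indicator φ y := by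
    rw [uIcc_of_le ht] at hx
    exact intervalIntegral_eq_integral_indicator_Iic (by linarith [hx.2]) (by linarith [hx.1])
  calc ∫ z in (0:ℝ)..t, ∫ y in (0:ℝ)..t - z, F z y
      = ∫ z in (0:ℝ)..t, ∫ y in (0:ℝ)..t, S.indicator (uncurry F) (z, y) := by
        refine intervalIntegral.integral_congr fun z hz => ?_
        simp only [cut hz, indicator_apply, S, mem_Iic, mem_ofPred_eq, le_sub_iff_add_le',
          uncurry_apply_pair]
    _ = ∫ y in (0:ℝ)..t, ∫ z in (0:ℝ)..t, S.indicator (uncurry F) (z, y) := by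
        refine intervalIntegral_intervalIntegral_swap ?_
        rw [uIoc_of_le ht]
        exact hF.indicator hS
    _ = ∫ y in (0:ℝ)..t, ∫ z in (0:ℝ)..t - y, F z y := by
        refine intervalIntegral.integral_congr fun y hy => ?_
        simp only [cut hy, indicator_apply, S, mem_Iic, mem_ofPred_eq, le_sub_iff_add_le,
          uncurry_apply_pair]

theorem intervalIntegral_triangle_mul_intervalIntegral {F G : ℝ → ℝ → ℝ} {t CF CG : ℝ}
    (ht : 0 ≤ t) (hF : Measurable (uncurry F)) (hG : Measurable (uncurry G))
    (hFb : ∀ z ∈ Icc 0 t, ∀ v ∈ Icc 0 t, |F z v| ≤ CF)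
    (hGb : ∀ z ∈ Icc 0 t, ∀ y ∈ Icc 0 t, |G z y| ≤ CG) :
    ∫ z in (0:ℝ)..t, ∫ y in (0:ℝ)..t - z, G z y * ∫ v in (0:ℝ)..y, F z v
      = ∫ y in (0:ℝ)..t, ∫ v in (0:ℝ)..y, ∫ z in (0:ℝ)..t - y, G z y * F z v := by
  have hCG : 0 ≤ CG := (abs_nonneg _).trans (hGb 0 ⟨le_rfl, ht⟩ 0 ⟨le_rfl, ht⟩)
  have hI : Measurable (uncurry fun z y => ∫ v in (0:ℝ)..y, F z v) :=
    measurable_intervalIntegral_of_uncurry hF 0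
  have hCF : 0 ≤ CF := (abs_nonneg _).trans (hFb 0 ⟨le_rfl, ht⟩ 0 ⟨le_rfl, ht⟩)
  have hIb {z y : ℝ} (hz : z ∈ Icc 0 t) (hy : y ∈ Icc 0 t) :
      |∫ v in (0:ℝ)..y, F z v| ≤ CF * t := by
    have := intervalIntegral.norm_integral_le_of_norm_le_const (f := F z) fun v hv =>
      (Real.norm_eq_abs _).trans_le <|
        hFb z hz v (uIoc_subset_uIcc.trans (uIcc_subset_Icc ⟨le_rfl, ht⟩ hy) hv)
    rw [Real.norm_eq_abs, sub_zero, abs_of_nonneg hy.1] at this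
    exact this.trans (mul_le_mul_of_nonneg_left hy.2 hCF)
  calc ∫ z in (0:ℝ)..t, ∫ y in (0:ℝ)..t - z, G z y * ∫ v in (0:ℝ)..y, F z v
      = ∫ y in (0:ℝ)..t, ∫ z in (0:ℝ)..t - y, G z y * ∫ v in (0:ℝ)..y, F z v := by
        refine intervalIntegral_triangle_swap ht (integrableOn_of_norm_le (C := CG * (CF * t))
          (hG.mul hI).aestronglyMeasurable (measurableSet_Ioc.prod measurableSet_Ioc)
          (Metric.isBounded_Ioc 0 t |>.prod (Metric.isBounded_Ioc 0 t)) fun p hp => ?_)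
        have hz := Ioc_subset_Icc_self hp.1
        have hy := Ioc_subset_Icc_self hp.2
        rw [uncurry_apply_pair, Real.norm_eq_abs, abs_mul]
        exact mul_le_mul (hGb _ hz _ hy) (hIb hz hy) (abs_nonneg _) hCG
    _ = ∫ y in (0:ℝ)..t, ∫ z in (0:ℝ)..t - y, ∫ v in (0:ℝ)..y, G z y * F z v := by
        simp_rw [intervalIntegral.integral_const_mul]
    _ = ∫ y in (0:ℝ)..t, ∫ v in (0:ℝ)..y, ∫ z in (0:ℝ)..t - y, G z y * F z v := by
        refine intervalIntegral.integral_congr fun y hy => ?_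
        rw [uIcc_of_le ht] at hy
        refine intervalIntegral_intervalIntegral_swap (integrableOn_of_norm_le (C := CG * CF)
          ((hG.comp (measurable_fst.prodMk measurable_const)).mul hF).aestronglyMeasurable
          (measurableSet_uIoc.prod measurableSet_uIoc)
          (Metric.isBounded_Ioc _ _ |>.prod (Metric.isBounded_Ioc _ _)) fun p hp => ?_)
        rw [uIoc_of_le (by linarith [hy.2]), uIoc_of_le hy.1] at hp
        have hz : p.1 ∈ Icc 0 t := ⟨hp.1.1.le, by linarith [hp.1.2, hy.1]⟩
        have hv : p.2 ∈ Icc 0 t := ⟨hp.2.1.le, hp.2.2.trans hy.2⟩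
        rw [uncurry_apply_pair, Real.norm_eq_abs, abs_mul]
        exact mul_le_mul (hGb _ hz _ hy) (hFb _ hz _ hv) (abs_nonneg _) hCG

lemma abs_intervalIntegral_mul_shift_le {f g : ℝ → ℝ} {n W t y v : ℝ}
    (hfg : ∀ s b, IntervalIntegrable (fun u => g (u + s) * f u) volume 0 b)
    (hW : ∀ v ∈ Icc (0:ℝ) n, ∀ t ∈ Icc (0:ℝ) (n - v), |∫ u in (0:ℝ)..t, g (u + v) * f u| ≤ W)
    (hv : 0 ≤ v) (hvy : v ≤ y) (hyt : y ≤ t) (htn : t ≤ n) :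
    |∫ z in (0:ℝ)..t - y, g (y + z) * f (v + z)| ≤ 2 * W := by
  have hshift : ∫ z in (0:ℝ)..t - y, g (y + z) * f (v + z)
      = ∫ u in v..t - y + v, g (u + (y - v)) * f u := by
    have := intervalIntegral.integral_comp_add_right (fun u => g (u + (y - v)) * f u)
      (a := 0) (b := t - y) v
    rw [zero_add] at this
    rw [← this]
    congr 1 with z
    ring_nf
  rw [hshift, ← intervalIntegral.integral_interval_sub_left (hfg _ _) (hfg _ _)]
  calc _ ≤ |∫ u in (0:ℝ)..t - y + v, g (u + (y - v)) * f u|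
        + |∫ u in (0:ℝ)..v, g (u + (y - v)) * f u| := abs_sub _ _
    _ ≤ W + W := add_le_add (hW _ ⟨by linarith, by linarith⟩ _ ⟨by linarith, by linarith⟩)
        (hW _ ⟨by linarith, by linarith⟩ _ ⟨hv, by linarith⟩)
    _ = 2 * W := by ring

lemma abs_intervalIntegral_exp_mul_shift_le (a : ℝ) {f g : ℝ → ℝ} {n W t y v : ℝ}
    (hfg : ∀ s b, IntervalIntegrable (fun u => g (u + s) * f u) volume 0 b)
    (hW : ∀ v ∈ Icc (0:ℝ) n, ∀ t ∈ Icc (0:ℝ) (n - v), |∫ u in (0:ℝ)..t, g (u + v) * f u| ≤ W)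
    (hv : 0 ≤ v) (hvy : v ≤ y) (hyt : y ≤ t) (htn : t ≤ n) :
    |∫ z in (0:ℝ)..t - y, exp (a * y) * g (y + z) * (exp (a * v) * f (v + z))|
      ≤ exp (a * y) * exp (a * v) * (2 * W) := by
  have hfactor : ∫ z in (0:ℝ)..t - y, exp (a * y) * g (y + z) * (exp (a * v) * f (v + z))
      = exp (a * y) * exp (a * v) * ∫ z in (0:ℝ)..t - y, g (y + z) * f (v + z) := by
    rw [← intervalIntegral.integral_const_mul]
    congr 1 with z
    ring
  rw [hfactor, abs_mul, abs_of_pos (by positivity)]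
  exact mul_le_mul_of_nonneg_left (abs_intervalIntegral_mul_shift_le hfg hW hv hvy hyt htn)
    (by positivity)

lemma abs_intervalIntegral_triangle_le {k w : ℝ → ℝ → ℝ} {t : ℝ} (ht : 0 ≤ t)
    (hw : Continuous (uncurry w)) (hkw : ∀ y ∈ Ioc 0 t, ∀ v ∈ Ioc 0 y, |k y v| ≤ w y v) :
    |∫ y in (0:ℝ)..t, ∫ v in (0:ℝ)..y, k y v| ≤ ∫ y in (0:ℝ)..t, ∫ v in (0:ℝ)..y, w y v := by
  rw [← Real.norm_eq_abs]
  refine intervalIntegral.norm_integral_le_of_norm_le ht (ae_of_all _ fun y hy => ?_)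
    (intervalIntegral.continuous_parametric_intervalIntegral_of_continuous (μ := volume) hw
      continuous_id |>.intervalIntegrable (μ := volume) _ _)
  exact intervalIntegral.norm_integral_le_of_norm_le hy.1.le (ae_of_all _ (hkw y hy))
    ((hw.comp (continuous_const.prodMk continuous_id)).intervalIntegrable (μ := volume) _ _)

lemma mul_integral_exp_mul (a y : ℝ) : a * ∫ v in (0:ℝ)..y, exp (a * v) = exp (a * y) - 1 := by
  rw [intervalIntegral.mul_integral_comp_mul_left (f := exp), integral_exp, mul_zero, exp_zero]

lemma sq_mul_integral_integral_exp_mul (a t : ℝ) :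
    a ^ 2 * ∫ y in (0:ℝ)..t, ∫ v in (0:ℝ)..y, exp (a * y) * exp (a * v)
      = (exp (a * t) - 1) ^ 2 / 2 := by
  have inner (y : ℝ) : a ^ 2 * ∫ v in (0:ℝ)..y, exp (a * y) * exp (a * v)
      = (exp (a * y) - 1) * (a * exp (a * y)) := by
    rw [intervalIntegral.integral_const_mul, ← mul_integral_exp_mul]; ring
  have hderiv (y : ℝ) : HasDerivAt (fun y => (exp (a * y) - 1) ^ 2 / 2)
      ((exp (a * y) - 1) * (a * exp (a * y))) y := by
    have h : HasDerivAt (fun y => exp (a * y) - 1) (exp (a * y) * a) y := by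
      simpa using ((hasDerivAt_id y).const_mul a).exp.sub_const 1
    refine ((h.fun_pow 2).div_const 2).congr_deriv ?_
    push_cast; ring
  rw [← intervalIntegral.integral_const_mul]
  simp_rw [inner]
  rw [intervalIntegral.integral_eq_sub_of_hasDerivAt (fun y _ => hderiv y)
    (by apply Continuous.intervalIntegrable; fun_prop)]
  simp

lemma abs_exp_mul_mul_le {a x C : ℝ} (ha : a ≤ 0) (hx : 0 ≤ x) {c : ℝ} (hc : |c| ≤ C) :
    |exp (a * x) * c| ≤ C := by
  rw [abs_mul, abs_exp]
  exact (mul_le_of_le_one_left (abs_nonneg c)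
    (exp_le_one_iff.2 (mul_nonpos_of_nonpos_of_nonneg ha hx))).trans hc

theorem H2_bound_general (a : ℝ) (ha : a ≤ 0) (n : ℝ)
    (f g : ℝ → ℝ) (hf : Measurable f) (hg : Measurable g)
    (hfb : ∃ C, ∀ x, |f x| ≤ C) (hgb : ∃ C, ∀ x, |g x| ≤ C)
    (W : ℝ)
    (hW2 : ∀ v ∈ Set.Icc (0:ℝ) n, ∀ t ∈ Set.Icc (0:ℝ) (n - v),
      |∫ u in (0:ℝ)..t, g (u + v) * f u| ≤ W) :
    ∀ t ∈ Set.Icc (0:ℝ) n,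
      |a ^ 2 * ∫ z in (0:ℝ)..t, ∫ y in (0:ℝ)..(t - z),
          Real.exp (a * y) * g (y + z) *
            ∫ v in (0:ℝ)..y, Real.exp (a * v) * f (v + z)| ≤ 2 * W := by
  obtain ⟨Cf, hCf⟩ := hfb
  obtain ⟨Cg, hCg⟩ := hgb
  rintro t ⟨ht, htn⟩
  have hW : 0 ≤ W := by simpa using hW2 0 ⟨le_rfl, ht.trans htn⟩ 0 ⟨le_rfl, by linarith⟩
  have hfg (s b : ℝ) : IntervalIntegrable (fun u => g (u + s) * f u) volume 0 b :=
    intervalIntegrable_of_abs_le (C := Cg * Cf) (by fun_prop) (fun u => (abs_mul _ _).trans_le <|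
      mul_le_mul (hCg _) (hCf _) (abs_nonneg _) ((abs_nonneg _).trans (hCg 0))) 0 b
  rw [intervalIntegral_triangle_mul_intervalIntegral ht (by fun_prop) (by fun_prop)
    (fun z _ v hv => abs_exp_mul_mul_le ha hv.1 (hCf (v + z)))
    (fun z _ y hy => abs_exp_mul_mul_le ha hy.1 (hCg (y + z))), abs_mul, abs_sq]
  calc a ^ 2 * |∫ y in (0:ℝ)..t, ∫ v in (0:ℝ)..y, ∫ z in (0:ℝ)..t - y,
        exp (a * y) * g (y + z) * (exp (a * v) * f (v + z))|
      ≤ a ^ 2 * ∫ y in (0:ℝ)..t, ∫ v in (0:ℝ)..y, exp (a * y) * exp (a * v) * (2 * W) :=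
        mul_le_mul_of_nonneg_left (abs_intervalIntegral_triangle_le ht (by fun_prop)
          fun y hy v hv => abs_intervalIntegral_exp_mul_shift_le a hfg hW2 hv.1.le hv.2 hy.2 htn)
          (sq_nonneg a)
    _ = (exp (a * t) - 1) ^ 2 / 2 * (2 * W) := by
        simp_rw [intervalIntegral.integral_mul_const]
        rw [← mul_assoc, sq_mul_integral_integral_exp_mul]
    _ ≤ 2 * W := by
        have h1 : exp (a * t) ≤ 1 := exp_le_one_iff.2 (mul_nonpos_of_nonpos_of_nonneg ha ht)
        exact mul_le_of_le_one_left (by positivity) (by nlinarith [exp_pos (a * t)])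

/-- H^{(2)}_{g,f}(t) = a² ∫₀ᵗ ∫₀^{t−z} e^{ay} g(y+z) (∫₀^y e^{av} f(v+z) dv) dy dz
is bounded by 2 ϖ*_{f,g}; `W` is an upper bound on both shifted-correlation
families defining ϖ*_{f,g}. -/
theorem H2_bound (a : ℝ) (ha : a ≤ 0) (n : ℝ) (hn : 1 ≤ n)
    (f g : ℝ → ℝ) (hf : Measurable f) (hg : Measurable g)
    (hfb : ∃ C, ∀ x, |f x| ≤ C) (hgb : ∃ C, ∀ x, |g x| ≤ C)
    (W : ℝ)
    (hW1 : ∀ v ∈ Set.Icc (0:ℝ) n, ∀ t ∈ Set.Icc (0:ℝ) (n - v),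
      |∫ u in (0:ℝ)..t, f (u + v) * g u| ≤ W)
    (hW2 : ∀ v ∈ Set.Icc (0:ℝ) n, ∀ t ∈ Set.Icc (0:ℝ) (n - v),
      |∫ u in (0:ℝ)..t, g (u + v) * f u| ≤ W) :
    ∀ t ∈ Set.Icc (0:ℝ) n,
      |a ^ 2 * ∫ z in (0:ℝ)..t, ∫ y in (0:ℝ)..(t - z),
          Real.exp (a * y) * g (y + z) *
            ∫ v in (0:ℝ)..y, Real.exp (a * v) * f (v + z)| ≤ 2 * W :=
  H2_bound_general a ha n f g hf hg hfb hgb W hW2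
end
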